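/- arXiv:0811.3292 — 6 statements merged into one kernel-verified Lean document; each statement's English description precedes it below -/
import Mathlib

section
/- Let p > 1 and β, γ, Ψ, g as in the standard change of variables, with L = ∞. If liminf_{t→∞} β(t) > 0 then liminf_{s→∞} g(s)/s > 0; and if lim_{t→∞} β(t) = ∞ then lim_{s→∞} g(s)/s = ∞. -/
set_option linter.unusedSectionVars false

open Set Filter intervalIntegral MeasureTheory Real

lemma myUIcc {a b : ℝ} (ha : 0 ≤ a) (hb : 0 ≤ b) : Set.uIcc a b ⊆ Set.Ici 0 := by
  intro x hx
  rcases le_total a b with h | h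
  · rw [Set.uIcc_of_le h] at hx; exact le_trans ha hx.1
  · rw [Set.uIcc_of_ge h] at hx; exact le_trans hb hx.1

section main
variable {p : ℝ} (hp : 1 < p) {β γ Ψ : ℝ → ℝ}
  (hβc : ContinuousOn β (Set.Ici 0)) (hβpos : ∀ t : ℝ, 0 ≤ t → 0 ≤ β t)
  (hγ : ∀ t : ℝ, γ t = ∫ θ in (0:ℝ)..t, β θ)
  (hΨ : ∀ t : ℝ, Ψ t = ∫ θ in (0:ℝ)..t, Real.exp (γ θ / (p - 1)))

include hβc hγ in
lemma γcont {b : ℝ} (hb : 0 ≤ b) : ContinuousOn γ (Icc 0 b) := by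
  have h := intervalIntegral.continuousOn_primitive_interval'
    ((hβc.mono (myUIcc le_rfl hb)).intervalIntegrable (μ := volume)) (Set.left_mem_uIcc (a := (0:ℝ)) (b := b))
  rw [Set.uIcc_of_le hb] at h
  exact h.congr fun x _ => hγ x

include hβc hβpos hγ in
lemma γdiff {a b : ℝ} (ha : 0 ≤ a) (hb : 0 ≤ b) :
    γ b - γ a = ∫ θ in a..b, β θ := by
  have h := intervalIntegral.integral_add_adjacent_intervals
    ((hβc.mono (myUIcc le_rfl ha)).intervalIntegrable (μ := volume))
    ((hβc.mono (myUIcc ha hb)).intervalIntegrable (μ := volume))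
  rw [hγ a, hγ b, ← h]; ring

include hβc hβpos hγ in
lemma γnonneg {t : ℝ} (ht : 0 ≤ t) : 0 ≤ γ t := by
  rw [hγ t]
  apply intervalIntegral.integral_nonneg ht
  intro u hu; exact hβpos u hu.1

include hp hβc hγ in
lemma fcont {b : ℝ} (hb : 0 ≤ b) :
    ContinuousOn (fun θ => Real.exp (γ θ / (p - 1))) (Icc 0 b) :=
  (Real.continuous_exp.comp_continuousOn ((γcont hβc hγ hb).div_const _))

include hp hβc hγ in
lemma fint {a b : ℝ} (ha : 0 ≤ a) (hb : 0 ≤ b) :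
    IntervalIntegrable (fun θ => Real.exp (γ θ / (p - 1))) volume a b := by
  apply ContinuousOn.intervalIntegrable (μ := volume)
  apply (fcont hp hβc hγ (le_trans ha (le_max_left a b))).mono
  exact Set.uIcc_subset_Icc ⟨ha, le_max_left a b⟩ ⟨hb, le_max_right a b⟩

end main

section two
variable {p : ℝ} {β γ Ψ : ℝ → ℝ} (hp : 1 < p) (hβc : ContinuousOn β (Set.Ici 0)) (hβpos : ∀ t : ℝ, 0 ≤ t → 0 ≤ β t)
  (hγ : ∀ t : ℝ, γ t = ∫ θ in (0:ℝ)..t, β θ)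
  (hΨ : ∀ t : ℝ, Ψ t = ∫ θ in (0:ℝ)..t, Real.exp (γ θ / (p - 1)))

include hp hβc hγ hΨ

lemma Ψdiff {a b : ℝ} (ha : 0 ≤ a) (hb : 0 ≤ b) :
    Ψ b - Ψ a = ∫ θ in a..b, Real.exp (γ θ / (p - 1)) := by
  have h := intervalIntegral.integral_add_adjacent_intervals
    (fint hp hβc hγ le_rfl ha) (fint hp hβc hγ ha hb)
  rw [hΨ a, hΨ b, ← h]; ring

include hβpos in
lemma Ψgap {a b : ℝ} (ha : 0 ≤ a) (hab : a ≤ b) : b - a ≤ Ψ b - Ψ a := by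
  have hb : 0 ≤ b := le_trans ha hab
  rw [Ψdiff hp hβc hγ hΨ ha hb]
  calc b - a = ∫ _ in a..b, (1:ℝ) := by simp
  _ ≤ ∫ θ in a..b, Real.exp (γ θ / (p - 1)) := by
      apply intervalIntegral.integral_mono_on hab (by simp) (fint hp hβc hγ ha hb)
      intro x hx
      rw [Real.one_le_exp_iff]
      exact div_nonneg (γnonneg hβc hβpos hγ (le_trans ha hx.1)) (by linarith)

lemma Ψ0 : Ψ 0 = 0 := by rw [hΨ 0]; simp

include hβpos in
lemma Ψmono : StrictMonoOn Ψ (Set.Ici 0) := by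
  intro a ha b hb hab
  have := Ψgap hp hβc hβpos hγ hΨ ha hab.le
  linarith

include hβpos in
lemma Ψsurj {s : ℝ} (hs : 0 ≤ s) : ∃ t ∈ Set.Ici (0:ℝ), Ψ t = s := by
  have hcont : ContinuousOn Ψ (Icc 0 s) := by
    have h := intervalIntegral.continuousOn_primitive_interval'
      (fint hp hβc hγ le_rfl hs) (Set.left_mem_uIcc (a := (0:ℝ)) (b := s))
    rw [Set.uIcc_of_le hs] at h
    exact h.congr fun x _ => hΨ x
  have hΨs : s ≤ Ψ s := by
    have := Ψgap hp hβc hβpos hγ hΨ le_rfl hs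
    rw [Ψ0 hp hβc hγ hΨ] at this; linarith
  have := intermediate_value_Icc hs hcont
  have hmem : s ∈ Set.Icc (Ψ 0) (Ψ s) := by
    rw [Ψ0 hp hβc hγ hΨ]; exact ⟨hs, hΨs⟩
  obtain ⟨t, ht, hts⟩ := this hmem
  exact ⟨t, ht.1, hts⟩

end two

section three
variable {p : ℝ} {β γ Ψ g : ℝ → ℝ} (hp : 1 < p)
  (hβc : ContinuousOn β (Set.Ici 0)) (hβpos : ∀ t : ℝ, 0 ≤ t → 0 ≤ β t)
  (hγ : ∀ t : ℝ, γ t = ∫ θ in (0:ℝ)..t, β θ)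
  (hΨ : ∀ t : ℝ, Ψ t = ∫ θ in (0:ℝ)..t, Real.exp (γ θ / (p - 1)))
  (hg : ∀ τ : ℝ, 0 ≤ τ →
      g τ = Real.exp (γ (Function.invFunOn Ψ (Set.Ici 0) τ) / (p - 1)) - 1)

include hp hβc hβpos hγ hΨ hg

lemma key {ε T : ℝ} (hε : 0 < ε) (hT : 0 ≤ T) (hβ : ∀ θ, T ≤ θ → ε ≤ β θ) :
    ∀ᶠ s in Filter.atTop, ε / (p - 1) / 4 ≤ g s / s := by
  have hp1 : (0:ℝ) < p - 1 := by linarith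
  set c := ε / (p - 1) with hcdef
  have hc : 0 < c := div_pos hε hp1
  -- Step A
  have stepA : ∀ a b : ℝ, T ≤ a → a ≤ b → ε * (b - a) ≤ γ b - γ a := by
    intro a b ha hab
    have ha0 : 0 ≤ a := le_trans hT ha
    have hb0 : 0 ≤ b := le_trans ha0 hab
    rw [γdiff hβc hβpos hγ ha0 hb0]
    calc ε * (b - a) = ∫ _ in a..b, ε := by simp [mul_comm]
    _ ≤ ∫ θ in a..b, β θ := by
        apply intervalIntegral.integral_mono_on hab (by simp)
          ((hβc.mono (myUIcc ha0 hb0)).intervalIntegrable (μ := volume))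
        intro x hx; exact hβ x (le_trans ha hx.1)
  -- Step B
  have stepB : ∀ t : ℝ, T ≤ t → Ψ t - Ψ T ≤ Real.exp (γ t / (p - 1)) / c := by
    intro t ht
    have ht0 : 0 ≤ t := le_trans hT ht
    set A := γ t / (p - 1) with hA
    rw [Ψdiff hp hβc hγ hΨ hT ht0]
    have hcontRHS : Continuous (fun θ : ℝ => Real.exp (A - c * t + c * θ)) := by
      continuity
    have hpoint : ∀ θ ∈ Set.Icc T t,
        Real.exp (γ θ / (p - 1)) ≤ Real.exp (A - c * t + c * θ) := by
      intro θ hθ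
      apply Real.exp_le_exp.mpr
      have h1 : ε * (t - θ) ≤ γ t - γ θ := stepA θ t hθ.1 hθ.2
      have h2 : γ θ / (p - 1) ≤ (γ t - ε * (t - θ)) / (p - 1) := by
        gcongr; linarith
      calc γ θ / (p - 1) ≤ (γ t - ε * (t - θ)) / (p - 1) := h2
      _ = A - c * t + c * θ := by rw [hA, hcdef]; field_simp; ring
    have hmono : (∫ θ in T..t, Real.exp (γ θ / (p - 1)))
        ≤ ∫ θ in T..t, Real.exp (A - c * t + c * θ) :=
      intervalIntegral.integral_mono_on ht (fint hp hβc hγ hT ht0)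
        (hcontRHS.intervalIntegrable T t) hpoint
    have hcalc : (∫ θ in T..t, Real.exp (A - c * t + c * θ))
        = (Real.exp A - Real.exp (A - c * t + c * T)) / c := by
      have hderiv : ∀ x ∈ Set.uIcc T t,
          HasDerivAt (fun θ => Real.exp (A - c * t + c * θ) / c)
            (Real.exp (A - c * t + c * x)) x := by
        intro x _
        have h1 : HasDerivAt (fun θ : ℝ => A - c * t + c * θ) c x := by
          simpa using ((hasDerivAt_id x).const_mul c).const_add (A - c * t)
        have h2 := (h1.exp).div_const c
        simpa [mul_div_assoc, mul_div_cancel_right₀ _ (ne_of_gt hc)] using h2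
      rw [intervalIntegral.integral_eq_sub_of_hasDerivAt hderiv
        (hcontRHS.intervalIntegrable T t)]
      have : A - c * t + c * t = A := by ring
      rw [this]; ring
    have hfinal : (Real.exp A - Real.exp (A - c * t + c * T)) / c ≤ Real.exp A / c := by
      gcongr
      have := Real.exp_pos (A - c * t + c * T)
      linarith
    calc (∫ θ in T..t, Real.exp (γ θ / (p - 1))) ≤ _ := hmono
    _ = _ := hcalc
    _ ≤ Real.exp A / c := hfinal
  -- Step C
  have stepC : ∀ t : ℝ, T ≤ t → ε * (t - T) ≤ γ t := by
    intro t ht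
    have := stepA T t le_rfl ht
    have := γnonneg hβc hβpos hγ hT
    linarith
  -- Step D : threshold
  set M := max 2 (c * Ψ T + 1) with hM
  have hM2 : (2:ℝ) ≤ M := le_max_left _ _
  have hM0 : (0:ℝ) < M := by linarith
  have hlogM : 0 ≤ Real.log M := Real.log_nonneg (by linarith)
  set T₀ := T + (p - 1) * Real.log M / ε with hT₀
  have hT₀T : T ≤ T₀ := by
    rw [hT₀]
    have : 0 ≤ (p - 1) * Real.log M / ε := by positivity
    linarith
  have hT₀0 : 0 ≤ T₀ := le_trans hT hT₀T
  have stepD : ∀ t : ℝ, T₀ ≤ t →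
      2 ≤ Real.exp (γ t / (p - 1)) ∧ Ψ t ≤ 2 * Real.exp (γ t / (p - 1)) / c := by
    intro t ht
    have htT : T ≤ t := le_trans hT₀T ht
    have hγt : (p - 1) * Real.log M ≤ γ t := by
      have h1 := stepC t htT
      have h2 : (p - 1) * Real.log M / ε ≤ t - T := by
        rw [hT₀] at ht; linarith
      calc (p - 1) * Real.log M = ε * ((p - 1) * Real.log M / ε) := by
            field_simp
      _ ≤ ε * (t - T) := by gcongr
      _ ≤ γ t := h1
    have hE : M ≤ Real.exp (γ t / (p - 1)) := by
      calc M = Real.exp (Real.log M) := (Real.exp_log hM0).symm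
      _ ≤ Real.exp (γ t / (p - 1)) := by
          apply Real.exp_le_exp.mpr
          rw [le_div_iff₀ hp1]; linarith [hγt]
    set E := Real.exp (γ t / (p - 1)) with hEdef
    have hE2 : 2 ≤ E := le_trans hM2 hE
    have hΨT : Ψ T ≤ E / c := by
      have h1 : c * Ψ T + 1 ≤ E := le_trans (le_max_right _ _) hE
      rw [le_div_iff₀ hc]; nlinarith
    have hB := stepB t htT
    refine ⟨hE2, ?_⟩
    have : Ψ t ≤ Ψ T + E / c := by linarith
    calc Ψ t ≤ E / c + E / c := by linarith
    _ = 2 * E / c := by ring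
  -- Step E : conclusion
  filter_upwards [Filter.eventually_ge_atTop (max (Ψ T₀) 1)] with s hs
  have hs1 : (1:ℝ) ≤ s := le_trans (le_max_right _ _) hs
  have hs0 : (0:ℝ) ≤ s := by linarith
  have hspos : (0:ℝ) < s := by linarith
  have hsT : Ψ T₀ ≤ s := le_trans (le_max_left _ _) hs
  have hex : ∃ x ∈ Set.Ici (0:ℝ), Ψ x = s := Ψsurj hp hβc hβpos hγ hΨ hs0
  set t := Function.invFunOn Ψ (Set.Ici 0) s with htdef
  have ht0 : t ∈ Set.Ici (0:ℝ) := Function.invFunOn_mem hex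
  have hts : Ψ t = s := Function.invFunOn_eq hex
  have htT₀ : T₀ ≤ t := by
    by_contra h
    push_neg at h
    have := Ψmono hp hβc hβpos hγ hΨ ht0 (Set.mem_Ici.mpr hT₀0) h
    linarith
  obtain ⟨hE2, hΨt⟩ := stepD t htT₀
  set E := Real.exp (γ t / (p - 1)) with hEdef
  have hgs : g s = E - 1 := by rw [hg s hs0]
  rw [hgs, le_div_iff₀ hspos]
  have h1 : s ≤ 2 * E / c := by rw [← hts]; exact hΨt
  have h2 : c / 4 * s ≤ c / 4 * (2 * E / c) := by gcongr
  have h3 : c / 4 * (2 * E / c) = E / 2 := by field_simp; ring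
  nlinarith

end three

/-- With `L = ∞`: if `liminf_{t→∞} β(t) > 0` then `liminf_{s→∞} g(s)/s > 0`; and if
`lim_{t→∞} β(t) = ∞` then `lim_{s→∞} g(s)/s = ∞`. -/
theorem stmt_5 (p : ℝ) (hp : 1 < p) (β γ Ψ g : ℝ → ℝ)
    (hβc : ContinuousOn β (Set.Ici 0)) (hβpos : ∀ t : ℝ, 0 ≤ t → 0 ≤ β t)
    (hγ : ∀ t : ℝ, γ t = ∫ θ in (0:ℝ)..t, β θ)
    (hΨ : ∀ t : ℝ, Ψ t = ∫ θ in (0:ℝ)..t, Real.exp (γ θ / (p - 1)))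
    (hg : ∀ τ : ℝ, 0 ≤ τ →
      g τ = Real.exp (γ (Function.invFunOn Ψ (Set.Ici 0) τ) / (p - 1)) - 1) :
    ((∃ ε > (0:ℝ), ∀ᶠ t in Filter.atTop, ε ≤ β t) →
      ∃ δ > (0:ℝ), ∀ᶠ s in Filter.atTop, δ ≤ g s / s) ∧
    (Filter.Tendsto β Filter.atTop Filter.atTop →
      Filter.Tendsto (fun s => g s / s) Filter.atTop Filter.atTop) := by
  have hp1 : (0:ℝ) < p - 1 := by linarith
  constructor
  · rintro ⟨ε, hε, hev⟩
    obtain ⟨T, hT⟩ := Filter.eventually_atTop.mp hev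
    refine ⟨ε / (p - 1) / 4, by positivity, ?_⟩
    exact key hp hβc hβpos hγ hΨ hg hε (le_max_right T 0)
      (fun θ hθ => hT θ (le_trans (le_max_left T 0) hθ))
  · intro hβtop
    rw [Filter.tendsto_atTop]
    intro b
    set ε := max (4 * (p - 1) * b) 1 with hεdef
    have hε : (0:ℝ) < ε := lt_of_lt_of_le one_pos (le_max_right _ _)
    obtain ⟨T, hT⟩ := Filter.eventually_atTop.mp (hβtop.eventually_ge_atTop ε)
    have hkey := key hp hβc hβpos hγ hΨ hg hε (le_max_right T 0)
      (fun θ hθ => hT θ (le_trans (le_max_left T 0) hθ))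
    filter_upwards [hkey] with s hs
    have hb : b ≤ ε / (p - 1) / 4 := by
      have h1 : 4 * (p - 1) * b ≤ ε := le_max_left _ _
      rw [div_div, le_div_iff₀ (by positivity)]
      linarith
    linarith
end

section
/- (Pointwise Picone inequality.) For every p > 1, all vectors a, b ∈ ℝ^N and reals s, t > 0: |a|^p − p·(t/s)^{p−1}·|b|^{p−2}⟨b, a⟩ + (p−1)·(t/s)^p·|b|^p ≥ 0, with equality if and only if a = (t/s) b. -/
/-!
The left-hand side splits as `D(‖a‖, c‖b‖) + p c^(p-1) ‖b‖^(p-2) (‖b‖‖a‖ - ⟪b, a⟫)` with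
`c = t / s`, where `D(X, Y) = X^p - p Y^(p-1) X + (p-1) Y^p` is the Bregman divergence of the
strictly convex function `X ↦ X^p`. The first term is nonnegative by Bernoulli's inequality and
vanishes only for `‖a‖ = c‖b‖`; the second is nonnegative by Cauchy–Schwarz and vanishes only when
`a` is a nonnegative multiple of `b`. Together these force `a = c • b`.
-/

open RealInnerProductSpace

namespace Real

noncomputable def rpowBregman (p X Y : ℝ) : ℝ := X ^ p - p * Y ^ (p - 1) * X + (p - 1) * Y ^ p

variable {p X Y : ℝ}

lemma rpowBregman_eq_mul (hX : 0 ≤ X) (hY : 0 < Y) :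
    rpowBregman p X Y = Y ^ p * ((X / Y) ^ p - (1 + p * (X / Y - 1))) := by
  have hYp : Y ^ (p - 1) * Y = Y ^ p := by
    rw [← rpow_add_one hY.ne', sub_add_cancel]
  rw [rpowBregman, div_rpow hX hY.le, ← hYp]
  field_simp
  ring

lemma rpowBregman_nonneg (hp : 1 ≤ p) (hX : 0 ≤ X) (hY : 0 < Y) : 0 ≤ rpowBregman p X Y := by
  have hu : -1 ≤ X / Y - 1 := by linarith [div_nonneg hX hY.le]
  have bernoulli := one_add_mul_self_le_rpow_one_add hu hp
  rw [add_sub_cancel] at bernoulli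
  rw [rpowBregman_eq_mul hX hY]
  exact mul_nonneg (rpow_nonneg hY.le p) (sub_nonneg.mpr bernoulli)

lemma rpowBregman_pos (hp : 1 < p) (hX : 0 ≤ X) (hY : 0 < Y) (hXY : X ≠ Y) :
    0 < rpowBregman p X Y := by
  have hu : -1 ≤ X / Y - 1 := by linarith [div_nonneg hX hY.le]
  have hu0 : X / Y - 1 ≠ 0 := by
    rwa [sub_ne_zero, ne_eq, div_eq_one_iff_eq hY.ne']
  have bernoulli := one_add_mul_self_lt_rpow_one_add hu hu0 hp
  rw [add_sub_cancel] at bernoulli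
  rw [rpowBregman_eq_mul hX hY]
  exact mul_pos (rpow_pos_of_pos hY p) (sub_pos.mpr bernoulli)

lemma rpowBregman_self (X : ℝ) : rpowBregman p X X = 0 := by
  rcases eq_or_ne X 0 with rfl | hX
  · by_cases hp : p = 0 <;> simp [rpowBregman, hp]
  · rw [rpowBregman, mul_assoc, ← rpow_add_one hX, sub_add_cancel]
    ring

lemma rpowBregman_eq_zero_iff (hp : 1 < p) (hX : 0 ≤ X) (hY : 0 < Y) :
    rpowBregman p X Y = 0 ↔ X = Y := by
  refine ⟨fun h => ?_, fun h => h ▸ rpowBregman_self X⟩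
  by_contra hXY
  exact (rpowBregman_pos hp hX hY hXY).ne' h

end Real

section InnerProductSpace

open Real

variable {E : Type*} [NormedAddCommGroup E] [InnerProductSpace ℝ E]

lemma eq_smul_iff_norm_eq_and_inner_eq {a b : E} {c : ℝ} (hb : b ≠ 0) (hc : 0 ≤ c) :
    a = c • b ↔ ‖a‖ = c * ‖b‖ ∧ ⟪b, a⟫ = ‖b‖ * ‖a‖ := by
  constructor
  · rintro rfl
    rw [norm_smul, norm_of_nonneg hc, real_inner_smul_right, real_inner_self_eq_norm_mul_norm]
    exact ⟨rfl, by ring⟩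
  · rintro ⟨hnorm, hinner⟩
    have hsmul : ‖b‖ • a = ‖b‖ • (c • b) := by
      rw [← inner_eq_norm_mul_iff_real.mp hinner, hnorm, smul_smul, mul_comm]
    exact smul_right_injective E (norm_ne_zero_iff.mpr hb) hsmul

variable {p c : ℝ} {a b : E}

lemma picone_eq_rpowBregman_add (hc : 0 < c) (hb : b ≠ 0) :
    ‖a‖ ^ p - p * c ^ (p - 1) * (‖b‖ ^ (p - 2) * ⟪b, a⟫) + (p - 1) * c ^ p * ‖b‖ ^ p
      = rpowBregman p ‖a‖ (c * ‖b‖)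
        + p * c ^ (p - 1) * ‖b‖ ^ (p - 2) * (‖b‖ * ‖a‖ - ⟪b, a⟫) := by
  have hB : 0 < ‖b‖ := norm_pos_iff.mpr hb
  have hB1 : ‖b‖ ^ (p - 2) * ‖b‖ = ‖b‖ ^ (p - 1) := by
    rw [← rpow_add_one hB.ne']
    ring_nf
  rw [rpowBregman, mul_rpow hc.le hB.le, mul_rpow hc.le hB.le, ← hB1]
  ring

lemma picone_nonneg (hp : 1 < p) (hc : 0 < c) (hb : b ≠ 0) :
    0 ≤ ‖a‖ ^ p - p * c ^ (p - 1) * (‖b‖ ^ (p - 2) * ⟪b, a⟫) + (p - 1) * c ^ p * ‖b‖ ^ p := by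
  have hB : 0 < ‖b‖ := norm_pos_iff.mpr hb
  rw [picone_eq_rpowBregman_add hc hb]
  refine add_nonneg (rpowBregman_nonneg hp.le (norm_nonneg a) (mul_pos hc hB)) ?_
  have := real_inner_le_norm b a
  have := rpow_pos_of_pos hc (p - 1)
  have := rpow_pos_of_pos hB (p - 2)
  have : 0 ≤ ‖b‖ * ‖a‖ - ⟪b, a⟫ := by linarith
  positivity

lemma picone_eq_zero_iff (hp : 1 < p) (hc : 0 < c) (hb : b ≠ 0) :
    ‖a‖ ^ p - p * c ^ (p - 1) * (‖b‖ ^ (p - 2) * ⟪b, a⟫) + (p - 1) * c ^ p * ‖b‖ ^ p = 0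
      ↔ a = c • b := by
  have hB : 0 < ‖b‖ := norm_pos_iff.mpr hb
  have hbregman := rpowBregman_nonneg hp.le (norm_nonneg a) (mul_pos hc hB)
  have hcoef : 0 < p * c ^ (p - 1) * ‖b‖ ^ (p - 2) := by
    have := rpow_pos_of_pos hc (p - 1)
    have := rpow_pos_of_pos hB (p - 2)
    positivity
  have hcs : 0 ≤ ‖b‖ * ‖a‖ - ⟪b, a⟫ := sub_nonneg.mpr (real_inner_le_norm b a)
  rw [picone_eq_rpowBregman_add hc hb,
    add_eq_zero_iff_of_nonneg hbregman (mul_nonneg hcoef.le hcs),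
    rpowBregman_eq_zero_iff hp (norm_nonneg a) (mul_pos hc hB), mul_eq_zero,
    or_iff_right hcoef.ne', sub_eq_zero, eq_comm (a := ‖b‖ * ‖a‖),
    eq_smul_iff_norm_eq_and_inner_eq hb hc.le]

end InnerProductSpace

open Classical in
/-- Pointwise Picone inequality: for `p > 1`, `a b ∈ ℝ^N`, `s, t > 0`,
`|a|^p − p(t/s)^(p−1)|b|^(p−2)⟨b,a⟩ + (p−1)(t/s)^p|b|^p ≥ 0`,
with equality iff `a = (t/s)b`; `|b|^(p−2)b` interpreted as `0` when `b = 0`. -/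
theorem stmt_12 (N : ℕ) (p s t : ℝ) (hp : 1 < p) (hs : 0 < s) (ht : 0 < t)
    (a b : EuclideanSpace ℝ (Fin N)) :
    0 ≤ ‖a‖ ^ p - p * (t / s) ^ (p - 1) * (if b = 0 then 0 else ‖b‖ ^ (p - 2) * (inner ℝ b a : ℝ))
        + (p - 1) * (t / s) ^ p * ‖b‖ ^ p ∧
      (‖a‖ ^ p - p * (t / s) ^ (p - 1) * (if b = 0 then 0 else ‖b‖ ^ (p - 2) * (inner ℝ b a : ℝ))
          + (p - 1) * (t / s) ^ p * ‖b‖ ^ p = 0 ↔ a = (t / s) • b) := by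
  have hc : 0 < t / s := div_pos ht hs
  by_cases hb : b = 0
  · have hp0 : p ≠ 0 := by positivity
    subst hb
    simp only [if_true, norm_zero, Real.zero_rpow hp0, mul_zero, sub_zero, add_zero, smul_zero,
      Real.rpow_eq_zero (norm_nonneg a) hp0, norm_eq_zero]
    exact ⟨Real.rpow_nonneg (norm_nonneg a) p, trivial⟩
  · rw [if_neg hb]
    exact ⟨picone_nonneg hp hc hb, picone_eq_zero_iff hp hc hb⟩
end

section
/- Let g : [0, ∞) → [0, ∞) be C¹, nondecreasing, with g(0) = 0, lim_{t→∞} g(t)/t = ∞, and g convex on [A, ∞) for some A ≥ 0. Define j(t) = t·g′(t) − g(t). Then lim_{t→∞} j(t) = ∞ and moreover lim_{t→∞} j(t)/g′(t) = ∞. -/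
/-- For `g` C¹, nondecreasing, `g(0)=0`, superlinear, convex on `[A,∞)`, and
`j(t) = t g′(t) − g(t)`: `lim_{t→∞} j(t) = ∞` and `lim_{t→∞} j(t)/g′(t) = ∞`. -/
theorem stmt_14 (g g' : ℝ → ℝ) (A : ℝ) (hA : 0 ≤ A)
    (hg0 : g 0 = 0) (hgpos : ∀ t : ℝ, 0 ≤ t → 0 ≤ g t)
    (hg' : ∀ t : ℝ, 0 ≤ t → HasDerivWithinAt g (g' t) (Set.Ici 0) t)
    (hg'c : ContinuousOn g' (Set.Ici 0))
    (hmono : MonotoneOn g (Set.Ici 0))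
    (hsuper : Filter.Tendsto (fun t => g t / t) Filter.atTop Filter.atTop)
    (hconv : MonotoneOn g' (Set.Ici A)) :
    Filter.Tendsto (fun t => t * g' t - g t) Filter.atTop Filter.atTop ∧
    Filter.Tendsto (fun t => (t * g' t - g t) / g' t) Filter.atTop Filter.atTop := by
  have hcont : ContinuousOn g (Set.Ici 0) := fun x hx => (hg' x hx).continuousWithinAt
  -- key inequality: for A ≤ s < t, g t - g s ≤ (t - s) * g' t
  have key : ∀ s t : ℝ, A ≤ s → s < t → g t - g s ≤ (t - s) * g' t := by
    intro s t hs hst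
    have hs0 : (0:ℝ) ≤ s := hA.trans hs
    obtain ⟨c, hc, hceq⟩ := exists_hasDerivAt_eq_slope g g' hst
      (hcont.mono (Set.Icc_subset_Ici_self.trans (Set.Ici_subset_Ici.2 hs0)))
      (fun x hx => (hg' x (hs0.trans hx.1.le)).hasDerivAt
        (Ici_mem_nhds (lt_of_le_of_lt hs0 hx.1)))
    have hct : g' c ≤ g' t :=
      hconv (Set.mem_Ici.2 (hs.trans hc.1.le)) (Set.mem_Ici.2 (hs.trans hst.le)) hc.2.le
    have hts : (0:ℝ) < t - s := by linarith
    have : g t - g s = (t - s) * g' c := by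
      rw [hceq]; field_simp
    rw [this]
    exact mul_le_mul_of_nonneg_left hct hts.le
  -- g' is eventually nonneg
  have hg'nn : ∀ t : ℝ, A < t → 0 ≤ g' t := by
    intro t ht
    have h1 := key A t le_rfl ht
    have h2 : g A ≤ g t := hmono (Set.mem_Ici.2 hA) (Set.mem_Ici.2 (hA.trans ht.le)) ht.le
    nlinarith
  -- g' tends to infinity
  have hg'top : Filter.Tendsto g' Filter.atTop Filter.atTop := by
    refine Filter.tendsto_atTop_mono' (f₁ := fun t => g t / t - |g A|) Filter.atTop ?_ ?_
    · filter_upwards [Filter.eventually_ge_atTop (max (A+1) 1)] with t ht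
      have ht1 : (1:ℝ) ≤ t := le_trans (le_max_right _ _) ht
      have htA : A < t := by
        have := (le_max_left (A+1) 1).trans ht; linarith
      have ht0 : (0:ℝ) < t := by linarith
      have h1 := key A t le_rfl htA
      have hnn := hg'nn t htA
      have h3 : (t - A) * g' t ≤ t * g' t := by nlinarith
      have h4 : g t - g A ≤ t * g' t := le_trans h1 h3
      have h5 : g t / t - g A / t ≤ g' t := by
        rw [div_sub_div_same, div_le_iff₀ ht0]
        linarith [h4]
      have h6 : g A / t ≤ |g A| := by
        have : g A / t ≤ g A := by
          apply div_le_self (hgpos A hA) ht1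
        exact this.trans (le_abs_self _)
      linarith
    · have := Filter.tendsto_atTop_add_const_right Filter.atTop (-|g A|) hsuper
      simpa [sub_eq_add_neg] using this
  constructor
  · rw [Filter.tendsto_atTop]
    intro b
    set s := max A 1 with hsdef
    have hsA : A ≤ s := le_max_left _ _
    have hs1 : (1:ℝ) ≤ s := le_max_right _ _
    have hs0 : (0:ℝ) < s := by linarith
    filter_upwards [Filter.eventually_gt_atTop s,
      hg'top.eventually_ge_atTop ((b + g s) / s)] with t ht hgt
    have h1 := key s t hsA ht
    have h2 : b + g s ≤ s * g' t := by
      rw [div_le_iff₀ hs0] at hgt; linarith [hgt]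
    nlinarith [h1, h2]
  · rw [Filter.tendsto_atTop]
    intro b
    set s := max A (b + 1) with hsdef
    have hsA : A ≤ s := le_max_left _ _
    have hsb : b + 1 ≤ s := le_max_right _ _
    filter_upwards [Filter.eventually_gt_atTop s,
      hg'top.eventually_ge_atTop (max 1 (g s))] with t ht hgt
    have hg1 : (1:ℝ) ≤ g' t := le_trans (le_max_left _ _) hgt
    have hgs : g s ≤ g' t := le_trans (le_max_right _ _) hgt
    have hg0 : (0:ℝ) < g' t := by linarith
    have h1 := key s t hsA ht
    have h2 : s * g' t - g s ≤ t * g' t - g t := by nlinarith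
    have h3 : s - g s / g' t ≤ (t * g' t - g t) / g' t := by
      rw [le_div_iff₀ hg0, sub_mul, div_mul_cancel₀ _ hg0.ne']
      linarith
    have hgsnn : 0 ≤ g s := hgpos s (le_trans hA hsA)
    have h4 : g s / g' t ≤ 1 := by
      rw [div_le_one hg0]; exact hgs
    linarith
end

section
/- Let g : [0, ∞) → [0, ∞) be C¹, nondecreasing, with g(0)=0, lim_{t→∞} g(t)/t = ∞, and g convex on [A, ∞) for some A ≥ 0. Define j(t) = t g′(t) − g(t) and h(t) = ∫₀ᵗ g′(s)(g′(t) − g′(s)) ds = g(t)g′(t) − ∫₀ᵗ g′(s)² ds. Then lim_{t→∞} h(t)/j(t) = ∞. -/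
open Set Filter MeasureTheory intervalIntegral

/-- For `g` C¹, nondecreasing, `g(0)=0`, superlinear, convex on `[A,∞)`, with
`j(t) = t g′(t) − g(t)` and `h(t) = ∫₀ᵗ g′(s)(g′(t)−g′(s))ds = g(t)g′(t) − ∫₀ᵗ g′(s)²ds`:
`lim_{t→∞} h(t)/j(t) = ∞`. -/
theorem stmt_15 (g g' j h : ℝ → ℝ) (A : ℝ) (hA : 0 ≤ A)
    (hg0 : g 0 = 0) (hgpos : ∀ t : ℝ, 0 ≤ t → 0 ≤ g t)
    (hg' : ∀ t : ℝ, 0 ≤ t → HasDerivWithinAt g (g' t) (Set.Ici 0) t)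
    (hg'c : ContinuousOn g' (Set.Ici 0))
    (hmono : MonotoneOn g (Set.Ici 0))
    (hsuper : Filter.Tendsto (fun t => g t / t) Filter.atTop Filter.atTop)
    (hconv : MonotoneOn g' (Set.Ici A))
    (hj : ∀ t : ℝ, j t = t * g' t - g t)
    (hh : ∀ t : ℝ, h t = g t * g' t - ∫ s in (0:ℝ)..t, (g' s) ^ 2) :
    Filter.Tendsto (fun t => h t / j t) Filter.atTop Filter.atTop := by
  -- subsets of Ici 0
  have hsubset : ∀ {a b : ℝ}, 0 ≤ a → a ≤ b → Set.uIcc a b ⊆ Set.Ici (0:ℝ) := by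
    intro a b ha hab
    rw [Set.uIcc_of_le hab]
    exact fun x hx => le_trans ha hx.1
  -- integrability
  have hint : ∀ a b : ℝ, 0 ≤ a → a ≤ b → IntervalIntegrable g' volume a b :=
    fun a b ha hab => (hg'c.mono (hsubset ha hab)).intervalIntegrable
  have hint2 : ∀ a b : ℝ, 0 ≤ a → a ≤ b →
      IntervalIntegrable (fun s => (g' s) ^ 2) volume a b :=
    fun a b ha hab => ((hg'c.mono (hsubset ha hab)).pow 2).intervalIntegrable
  -- g' is nonnegative on [0,∞)
  have hg'nn : ∀ t : ℝ, 0 ≤ t → 0 ≤ g' t := by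
    intro t ht
    have hslope : Tendsto (slope g t) (nhdsWithin t (Set.Ioi t)) (nhds (g' t)) := by
      have h1 := (hasDerivWithinAt_iff_tendsto_slope).1 (hg' t ht)
      refine h1.mono_left (nhdsWithin_mono t ?_)
      intro y hy
      exact ⟨le_trans ht (le_of_lt hy), ne_of_gt hy⟩
    refine ge_of_tendsto hslope ?_
    filter_upwards [self_mem_nhdsWithin] with y hy
    have hy' : t < y := hy
    have hmle : g t ≤ g y := hmono ht (le_trans ht hy'.le) hy'.le
    rw [slope_def_field]
    apply div_nonneg (by linarith) (by linarith)
  -- FTC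
  have hFTC : ∀ t : ℝ, 0 ≤ t → (∫ s in (0:ℝ)..t, g' s) = g t := by
    intro t ht
    have hcont : ContinuousOn g (Set.Icc 0 t) := by
      intro x hx
      exact ((hg' x hx.1).continuousWithinAt).mono (fun y hy => hy.1)
    have := intervalIntegral.integral_eq_sub_of_hasDeriv_right_of_le ht hcont
      (fun x hx => (hg' x hx.1.le).mono (fun y hy => le_trans hx.1.le (le_of_lt hy)))
      (hint 0 t le_rfl ht)
    rw [this, hg0, sub_zero]
  have hFTC' : ∀ u t : ℝ, 0 ≤ u → u ≤ t → (∫ s in u..t, g' s) = g t - g u := by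
    intro u t hu hut
    have h1 := intervalIntegral.integral_add_adjacent_intervals
      (hint 0 u le_rfl hu) (hint u t hu hut)
    rw [hFTC u hu, hFTC t (le_trans hu hut)] at h1
    linarith
  -- convexity bound: g t - g u ≤ (t - u) * g' t for A ≤ u ≤ t
  have key1 : ∀ u t : ℝ, A ≤ u → u ≤ t → g t - g u ≤ (t - u) * g' t := by
    intro u t hAu hut
    have hu0 : 0 ≤ u := le_trans hA hAu
    have hle : (∫ s in u..t, g' s) ≤ ∫ s in u..t, g' t := by
      apply intervalIntegral.integral_mono_on hut (hint u t hu0 hut)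
        intervalIntegrable_const
      intro s hs
      exact hconv (le_trans hAu hs.1) (le_trans hAu hut) hs.2
    rw [hFTC' u t hu0 hut, intervalIntegral.integral_const, smul_eq_mul] at hle
    linarith
  -- g' tends to infinity
  have hg'top : Tendsto g' atTop atTop := by
    rw [tendsto_atTop]
    intro C
    have hgA : 0 ≤ g A := hgpos A hA
    have hev : ∀ᶠ t in atTop, max C 0 + g A + 1 ≤ g t / t :=
      hsuper.eventually_ge_atTop _
    filter_upwards [hev, eventually_ge_atTop (max A 1 + 1)] with t h1 h2
    have ht1 : (1:ℝ) ≤ t := by have := le_max_right A 1; linarith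
    have htA : A + 1 ≤ t := by
      have := le_max_left A 1; linarith
    have ht0 : (0:ℝ) < t := by linarith
    have hgt : (max C 0 + g A + 1) * t ≤ g t := by
      rw [le_div_iff₀ ht0] at h1
      linarith [h1]
    have hCt : max C 0 * (t - A) ≤ g t - g A := by
      have h3 : max C 0 * (t - A) ≤ max C 0 * t := by
        apply mul_le_mul_of_nonneg_left (by linarith) (le_max_right C 0)
      have h4 : max C 0 * t + g A ≤ (max C 0 + g A + 1) * t := by nlinarith [le_max_right C 0, hgA]
      linarith
    have h5 := key1 A t le_rfl (by linarith)
    have h6 : max C 0 * (t - A) ≤ (t - A) * g' t := by linarith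
    have h7 : max C 0 ≤ g' t := by
      have htA' : (0:ℝ) < t - A := by linarith
      nlinarith
    exact le_trans (le_max_left C 0) h7
  -- lower bound on j
  have hjlb : ∀ u t : ℝ, A ≤ u → u ≤ t → u * g' t - g u ≤ j t := by
    intro u t hAu hut
    have := key1 u t hAu hut
    rw [hj t]
    nlinarith
  -- lower bound on h
  have hhlb : ∀ m t : ℝ, A ≤ m → m ≤ t →
      g' m * (j t - m * g' t) - (∫ s in (0:ℝ)..m, (g' s) ^ 2) ≤ h t := by
    intro m t hAm hmt
    have hm0 : 0 ≤ m := le_trans hA hAm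
    have ht0 : 0 ≤ t := le_trans hm0 hmt
    -- h t = ∫₀ᵗ (g' s * g' t - g' s ^ 2)
    have hrw : h t = ∫ s in (0:ℝ)..t, (g' s * g' t - (g' s) ^ 2) := by
      rw [hh t, intervalIntegral.integral_sub ((hint 0 t le_rfl ht0).mul_const _)
        (hint2 0 t le_rfl ht0), intervalIntegral.integral_mul_const, hFTC t ht0]
    have hsplit : (∫ s in (0:ℝ)..t, (g' s * g' t - (g' s) ^ 2))
        = (∫ s in (0:ℝ)..m, (g' s * g' t - (g' s) ^ 2))
          + ∫ s in m..t, (g' s * g' t - (g' s) ^ 2) := by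
      rw [intervalIntegral.integral_add_adjacent_intervals]
      · exact ((hint 0 m le_rfl hm0).mul_const _).sub (hint2 0 m le_rfl hm0)
      · exact ((hint m t hm0 hmt).mul_const _).sub (hint2 m t hm0 hmt)
    have hb1 : -(∫ s in (0:ℝ)..m, (g' s) ^ 2)
        ≤ ∫ s in (0:ℝ)..m, (g' s * g' t - (g' s) ^ 2) := by
      have hb1' : (∫ s in (0:ℝ)..m, (-((g' s) ^ 2)))
          ≤ ∫ s in (0:ℝ)..m, (g' s * g' t - (g' s) ^ 2) := by
        refine intervalIntegral.integral_mono_on hm0 ((hint2 0 m le_rfl hm0).neg)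
          (((hint 0 m le_rfl hm0).mul_const _).sub (hint2 0 m le_rfl hm0)) ?_
        intro s hs
        have := mul_nonneg (hg'nn s hs.1) (hg'nn t ht0)
        nlinarith
      rwa [intervalIntegral.integral_neg] at hb1'
    have hb2 : g' m * ((t - m) * g' t - (g t - g m))
        ≤ ∫ s in m..t, (g' s * g' t - (g' s) ^ 2) := by
      have heq : (∫ s in m..t, g' m * (g' t - g' s))
          = g' m * ((t - m) * g' t - (g t - g m)) := by
        rw [intervalIntegral.integral_const_mul]
        congr 1
        rw [intervalIntegral.integral_sub intervalIntegrable_const (hint m t hm0 hmt),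
          intervalIntegral.integral_const, hFTC' m t hm0 hmt, smul_eq_mul]
      rw [← heq]
      refine intervalIntegral.integral_mono_on hmt
        ((intervalIntegrable_const.sub (hint m t hm0 hmt)).const_mul _)
        (((hint m t hm0 hmt).mul_const _).sub (hint2 m t hm0 hmt)) ?_
      intro s hs
      have h1 : g' m ≤ g' s := hconv hAm (le_trans hAm hs.1) hs.1
      have h2 : g' s ≤ g' t := hconv (le_trans hAm hs.1) (le_trans hAm hmt) hs.2
      nlinarith
    have hgm : 0 ≤ g m := hgpos m hm0
    have hg'm : 0 ≤ g' m := hg'nn m hm0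
    have hjt : j t = t * g' t - g t := hj t
    nlinarith [hb1, hb2]
  -- main argument
  rw [tendsto_atTop]
  intro K
  obtain ⟨m, hgm, hAm⟩ :=
    ((hg'top.eventually_ge_atTop (K + 1)).and (eventually_ge_atTop A)).exists
  have hm0 : 0 ≤ m := le_trans hA hAm
  have hg'm : 0 ≤ g' m := hg'nn m hm0
  set C := ∫ s in (0:ℝ)..m, (g' s) ^ 2 with hC
  have hC0 : 0 ≤ C := by
    apply intervalIntegral.integral_nonneg hm0
    intro s hs; positivity
  set u := A + m * g' m + 1 with hu
  have hu0 : 0 ≤ u := by positivity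
  have hAu : A ≤ u := by nlinarith
  have hgu : 0 ≤ g u := hgpos u hu0
  filter_upwards [eventually_ge_atTop u, eventually_ge_atTop m,
    hg'top.eventually_ge_atTop (g u + C + 1), eventually_ge_atTop (0:ℝ)] with t htu htm htg' ht0
  have hg't : 0 ≤ g' t := hg'nn t ht0
  have hj1 : u * g' t - g u ≤ j t := hjlb u t hAu htu
  have hjD : g' m * (m * g' t) + C + 1 ≤ j t := by nlinarith
  have hjpos : 0 < j t := by
    nlinarith [mul_nonneg hg'm (mul_nonneg hm0 hg't)]
  have hht : g' m * (j t - m * g' t) - C ≤ h t := hhlb m t hAm htm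
  rw [le_div_iff₀ hjpos]
  nlinarith [mul_nonneg (by linarith : (0:ℝ) ≤ g' m - 1 - K) hjpos.le, hjD, hht]
end

section
/- Let p > 1 and g : [0, ∞) → [0, ∞) be C¹, nondecreasing with g(0)=0. Define φ(t) = (1+g(t))^{p−1}, Φ(t) = ∫₀ᵗ φ(s) ds, 𝒥(t) = t·φ(t) − p·Φ(t), and j(t) = t g′(t) − g(t). Then for all t > 0 with g′(t) > 0: 𝒥′(t) = (p−1)(1+g(t))^{p−2}(j(t) − 1) = φ′(t)·(j(t)−1)/g′(t). Consequently, if g is superlinear and convex near ∞, then lim_{t→∞} 𝒥(t)/φ(t) = ∞. -/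
/-!
Differentiating `𝒥 = tφ − pΦ` by the product rule and the fundamental theorem of
calculus gives `𝒥′ = tφ′ − (p − 1)φ`, which is the stated formula once
`φ′ = (p − 1)(1 + g)^(p−2) g′` is inserted.

For the limit, convexity of `g` on `[A, ∞)` gives the tangent bound
`g t − g s ≤ g′ t (t − s)` for `A ≤ s ≤ t`. With `s = A` and superlinearity it forces
`g′ → ∞`; with `s` large it then gives `j − 1 ≥ M g′` eventually, i.e.
`𝒥′ ≥ M φ′` eventually, for every `M`. So `𝒥 − Mφ` is eventually nondecreasing,
and as `φ → ∞` this yields `𝒥/φ ≥ M − 1` eventually.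
-/

open Set Filter Real

section TangentBound

variable {g g' : ℝ → ℝ} {A : ℝ}

theorem sub_le_deriv_mul_sub_of_monotoneOn
    (hg : ∀ t ∈ Ici A, HasDerivWithinAt g (g' t) (Ici A) t) (hmono : MonotoneOn g' (Ici A))
    {s t : ℝ} (hs : A ≤ s) (hst : s ≤ t) : g t - g s ≤ g' t * (t - s) := by
  have hsub : Icc s t ⊆ Ici A := fun x hx => hs.trans hx.1
  have hderiv : ∀ x ∈ Ioo s t, HasDerivAt g (g' x) x := fun x hx =>
    (hg x (hsub (Ioo_subset_Icc_self hx))).hasDerivAt (Ici_mem_nhds (hs.trans_lt hx.1))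
  refine (convex_Icc s t).image_sub_le_mul_sub_of_deriv_le
    (fun x hx => (hg x (hsub hx)).continuousWithinAt.mono hsub) ?_ ?_ s
    (left_mem_Icc.2 hst) t (right_mem_Icc.2 hst) hst
  all_goals rw [interior_Icc]
  · exact fun x hx => (hderiv x hx).differentiableAt.differentiableWithinAt
  · intro x hx
    rw [(hderiv x hx).deriv]
    exact hmono (hsub (Ioo_subset_Icc_self hx)) (hs.trans hst) hx.2.le

theorem tendsto_deriv_atTop_of_superlinear
    (hg : ∀ t ∈ Ici A, HasDerivWithinAt g (g' t) (Ici A) t) (hmono : MonotoneOn g' (Ici A))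
    (hA : 0 ≤ A) (hsup : Tendsto (fun t => g t / t) atTop atTop) :
    Tendsto g' atTop atTop := by
  have hbound : ∀ᶠ t in atTop, g t / t - |g A| ≤ max (g' t) 0 := by
    filter_upwards [eventually_ge_atTop (max A 1)] with t ht
    have hAt : A ≤ t := (le_max_left _ _).trans ht
    have ht1 : 1 ≤ t := (le_max_right _ _).trans ht
    have htangent := sub_le_deriv_mul_sub_of_monotoneOn hg hmono le_rfl hAt
    rw [div_sub' (by linarith), div_le_iff₀ (by linarith)]
    nlinarith [le_abs_self (g A), abs_nonneg (g A), le_max_left (g' t) 0, le_max_right (g' t) 0,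
      mul_le_mul_of_nonneg_right (le_max_left (g' t) 0) (sub_nonneg.2 hAt)]
  have hmax : Tendsto (fun t => max (g' t) 0) atTop atTop :=
    tendsto_atTop_mono' _ hbound (tendsto_atTop_add_const_right _ _ hsup)
  refine tendsto_atTop.2 fun M => ?_
  filter_upwards [hmax.eventually_gt_atTop (max M 0)] with t ht
  rcases le_total (g' t) 0 with h | h
  · rw [max_eq_right h] at ht
    exact absurd ht (not_lt.2 (le_max_right _ _))
  · rw [max_eq_left h] at ht
    exact (le_max_left _ _).trans ht.le

theorem eventually_mul_deriv_le_sub_sub_one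
    (hg : ∀ t ∈ Ici A, HasDerivWithinAt g (g' t) (Ici A) t) (hmono : MonotoneOn g' (Ici A))
    (hA : 0 ≤ A) (hsup : Tendsto (fun t => g t / t) atTop atTop) (M : ℝ) :
    ∀ᶠ t in atTop, M * g' t ≤ t * g' t - g t - 1 := by
  set s := max A M + 1
  have hAs : A ≤ s := by linarith [le_max_left A M]
  have hMs : M + 1 ≤ s := by linarith [le_max_right A M]
  filter_upwards [eventually_ge_atTop s, (tendsto_deriv_atTop_of_superlinear hg hmono hA
    hsup).eventually_ge_atTop (max (g s + 1) 0)] with t hst hg't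
  have htangent := sub_le_deriv_mul_sub_of_monotoneOn hg hmono hAs hst
  nlinarith [le_max_left (g s + 1) 0, le_max_right (g s + 1) 0]

end TangentBound

theorem tendsto_div_atTop_of_hasDerivAt {f h f' h' : ℝ → ℝ}
    (hf : ∀ᶠ t in atTop, HasDerivAt f (f' t) t) (hh : ∀ᶠ t in atTop, HasDerivAt h (h' t) t)
    (hh_top : Tendsto h atTop atTop) (hderiv : ∀ M, ∀ᶠ t in atTop, M * h' t ≤ f' t) :
    Tendsto (fun t => f t / h t) atTop atTop := by
  refine tendsto_atTop.2 fun C => ?_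
  obtain ⟨T, hT⟩ := eventually_atTop.1 (hf.and (hh.and (hderiv (C + 1))))
  have hdiff : ∀ x ∈ Ici T,
      HasDerivAt (fun u => f u - (C + 1) * h u) (f' x - (C + 1) * h' x) x :=
    fun x hx => (hT x hx).1.sub ((hT x hx).2.1.const_mul (C + 1))
  have hmono : MonotoneOn (fun u => f u - (C + 1) * h u) (Ici T) :=
    monotoneOn_of_hasDerivWithinAt_nonneg (convex_Ici T)
      (fun x hx => (hdiff x hx).continuousAt.continuousWithinAt)
      (fun x hx => (hdiff x (interior_subset hx)).hasDerivWithinAt)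
      (fun x hx => sub_nonneg.2 (hT x (interior_subset hx)).2.2)
  filter_upwards [eventually_ge_atTop T,
    hh_top.eventually_ge_atTop (max 1 ((C + 1) * h T - f T))] with t hTt hht
  have hpos : 0 < h t := zero_lt_one.trans_le ((le_max_left _ _).trans hht)
  have hgrowth : f T - (C + 1) * h T ≤ f t - (C + 1) * h t := hmono self_mem_Ici hTt hTt
  rw [le_div_iff₀ hpos]
  linarith [le_max_right 1 ((C + 1) * h T - f T)]

theorem hasDerivAt_mul_sub_mul_integral {f : ℝ → ℝ} {f' t : ℝ} (p : ℝ)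
    (hf : ContinuousOn f (Ici 0)) (ht : 0 < t) (hf' : HasDerivAt f f' t) :
    HasDerivAt (fun u => u * f u - p * ∫ s in (0 : ℝ)..u, f s) (t * f' - (p - 1) * f t) t := by
  have hFTC : HasDerivAt (fun u => ∫ s in (0 : ℝ)..u, f s) (f t) t :=
    intervalIntegral.integral_hasDerivAt_right
      ((hf.mono (by simp [uIcc_of_le ht.le, Icc_subset_Ici_self])).intervalIntegrable)
      ((hf.mono Ioi_subset_Ici_self).stronglyMeasurableAtFilter isOpen_Ioi t ht)
      ((hf t ht.le).continuousAt (Ici_mem_nhds ht))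
  exact (((hasDerivAt_id' t).fun_mul hf').fun_sub (hFTC.const_mul p)).congr_deriv (by ring)

theorem hasDerivAt_one_add_rpow {g : ℝ → ℝ} {g' t : ℝ} (q : ℝ) (hg : HasDerivAt g g' t)
    (hpos : 0 < 1 + g t) :
    HasDerivAt (fun u => (1 + g u) ^ q) (q * (1 + g t) ^ (q - 1) * g') t :=
  ((hg.const_add 1).rpow_const (p := q) (Or.inl hpos.ne')).congr_deriv (by ring)

section Weight

variable {p : ℝ} {g g' : ℝ → ℝ}

theorem continuousOn_one_add_rpow (hgpos : ∀ t, 0 ≤ t → 0 ≤ g t)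
    (hg : ∀ t, 0 ≤ t → HasDerivWithinAt g (g' t) (Ici 0) t) :
    ContinuousOn (fun t => (1 + g t) ^ (p - 1)) (Ici 0) :=
  (continuousOn_const.add fun t ht => (hg t ht).continuousWithinAt).rpow_const
    fun t ht => Or.inl (show 0 < 1 + g t by linarith [hgpos t ht]).ne'

theorem hasDerivAt_one_add_rpow_sub_one (hgpos : ∀ t, 0 ≤ t → 0 ≤ g t)
    (hg : ∀ t, 0 ≤ t → HasDerivWithinAt g (g' t) (Ici 0) t) {t : ℝ} (ht : 0 < t) :
    HasDerivAt (fun u => (1 + g u) ^ (p - 1)) ((p - 1) * (1 + g t) ^ (p - 2) * g' t) t :=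
  (hasDerivAt_one_add_rpow (p - 1) ((hg t ht.le).hasDerivAt (Ici_mem_nhds ht))
    (by linarith [hgpos t ht.le])).congr_deriv (by ring_nf)

theorem hasDerivAt_mul_one_add_rpow_sub_integral (hgpos : ∀ t, 0 ≤ t → 0 ≤ g t)
    (hg : ∀ t, 0 ≤ t → HasDerivWithinAt g (g' t) (Ici 0) t) {t : ℝ} (ht : 0 < t) :
    HasDerivAt
      (fun u => u * (1 + g u) ^ (p - 1) - p * ∫ s in (0 : ℝ)..u, (1 + g s) ^ (p - 1))
      ((p - 1) * (1 + g t) ^ (p - 2) * (t * g' t - g t - 1)) t := by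
  refine (hasDerivAt_mul_sub_mul_integral p (continuousOn_one_add_rpow hgpos hg) ht
    (hasDerivAt_one_add_rpow_sub_one hgpos hg ht)).congr_deriv ?_
  have hpos : 0 < 1 + g t := by linarith [hgpos t ht.le]
  rw [show p - 1 = p - 2 + 1 by ring, rpow_add_one hpos.ne']
  ring

end Weight

theorem stmt_16_general (p : ℝ) (hp : 1 < p) (g g' : ℝ → ℝ)
    (hgpos : ∀ t : ℝ, 0 ≤ t → 0 ≤ g t)
    (hg' : ∀ t : ℝ, 0 ≤ t → HasDerivWithinAt g (g' t) (Set.Ici 0) t)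
    (φ Φ J j : ℝ → ℝ)
    (hφ : ∀ t : ℝ, φ t = (1 + g t) ^ (p - 1))
    (hΦ : ∀ t : ℝ, Φ t = ∫ s in (0:ℝ)..t, φ s)
    (hJ : ∀ t : ℝ, J t = t * φ t - p * Φ t)
    (hj : ∀ t : ℝ, j t = t * g' t - g t) :
    (∀ t : ℝ, 0 < t → 0 < g' t →
      HasDerivWithinAt J ((p - 1) * (1 + g t) ^ (p - 2) * (j t - 1)) (Set.Ici 0) t ∧
      (p - 1) * (1 + g t) ^ (p - 2) * (j t - 1)
        = ((p - 1) * (1 + g t) ^ (p - 2) * g' t) * (j t - 1) / g' t) ∧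
    ((Filter.Tendsto (fun t => g t / t) Filter.atTop Filter.atTop ∧
        ∃ A : ℝ, 0 ≤ A ∧ MonotoneOn g' (Set.Ici A)) →
      Filter.Tendsto (fun t => J t / φ t) Filter.atTop Filter.atTop) := by
  obtain rfl : φ = fun t => (1 + g t) ^ (p - 1) := funext hφ
  have hJf :
      J = fun t => t * (1 + g t) ^ (p - 1) - p * ∫ s in (0 : ℝ)..t, (1 + g s) ^ (p - 1) :=
    funext fun t => by rw [hJ, hΦ]
  have hJ' : ∀ t, 0 < t → HasDerivAt J ((p - 1) * (1 + g t) ^ (p - 2) * (j t - 1)) t := by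
    intro t ht
    rw [hJf, hj]
    exact hasDerivAt_mul_one_add_rpow_sub_integral hgpos hg' ht
  refine ⟨fun t ht hg't => ⟨(hJ' t ht).hasDerivWithinAt, by field_simp⟩, ?_⟩
  rintro ⟨hsup, A, hA, hmonoA⟩
  have hgA : ∀ t ∈ Ici A, HasDerivWithinAt g (g' t) (Ici A) t := fun t ht =>
    (hg' t (hA.trans ht)).mono (Ici_subset_Ici.2 hA)
  have hgtop : Tendsto g atTop atTop := tendsto_atTop_mono' _
    (by filter_upwards [eventually_ge_atTop 1] with t ht
          using div_le_self (hgpos t (by linarith)) ht)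
    hsup
  refine tendsto_div_atTop_of_hasDerivAt ((eventually_gt_atTop 0).mono hJ')
    ((eventually_gt_atTop 0).mono fun t => hasDerivAt_one_add_rpow_sub_one hgpos hg')
    ((tendsto_rpow_atTop (by linarith)).comp (tendsto_atTop_add_const_left _ 1 hgtop))
    fun M => ?_
  filter_upwards [eventually_gt_atTop 0, eventually_mul_deriv_le_sub_sub_one hgA hmonoA hA hsup M]
    with t ht hMt
  have hc : 0 ≤ (p - 1) * (1 + g t) ^ (p - 2) :=
    mul_nonneg (by linarith) (rpow_nonneg (by linarith [hgpos t ht.le]) _)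
  rw [hj, mul_left_comm]
  exact mul_le_mul_of_nonneg_left hMt hc

/-- With `φ(t) = (1+g(t))^(p−1)`, `Φ(t) = ∫₀ᵗ φ`, `J(t) = tφ(t) − pΦ(t)`,
`j(t) = tg′(t) − g(t)`: for `t > 0` with `g′(t) > 0`,
`J′(t) = (p−1)(1+g(t))^(p−2)(j(t)−1) = φ′(t)(j(t)−1)/g′(t)`; consequently if `g` is
superlinear and convex near `∞`, then `lim_{t→∞} J(t)/φ(t) = ∞`. -/
theorem stmt_16 (p : ℝ) (hp : 1 < p) (g g' : ℝ → ℝ)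
    (hg0 : g 0 = 0) (hgpos : ∀ t : ℝ, 0 ≤ t → 0 ≤ g t)
    (hg' : ∀ t : ℝ, 0 ≤ t → HasDerivWithinAt g (g' t) (Set.Ici 0) t)
    (hg'c : ContinuousOn g' (Set.Ici 0))
    (hmono : MonotoneOn g (Set.Ici 0))
    (φ Φ J j : ℝ → ℝ)
    (hφ : ∀ t : ℝ, φ t = (1 + g t) ^ (p - 1))
    (hΦ : ∀ t : ℝ, Φ t = ∫ s in (0:ℝ)..t, φ s)
    (hJ : ∀ t : ℝ, J t = t * φ t - p * Φ t)
    (hj : ∀ t : ℝ, j t = t * g' t - g t) :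
    (∀ t : ℝ, 0 < t → 0 < g' t →
      HasDerivWithinAt J ((p - 1) * (1 + g t) ^ (p - 2) * (j t - 1)) (Set.Ici 0) t ∧
      (p - 1) * (1 + g t) ^ (p - 2) * (j t - 1)
        = ((p - 1) * (1 + g t) ^ (p - 2) * g' t) * (j t - 1) / g' t) ∧
    ((Filter.Tendsto (fun t => g t / t) Filter.atTop Filter.atTop ∧
        ∃ A : ℝ, 0 ≤ A ∧ MonotoneOn g' (Set.Ici A)) →
      Filter.Tendsto (fun t => J t / φ t) Filter.atTop Filter.atTop) :=
  stmt_16_general p hp g g' hgpos hg' φ Φ J j hφ hΦ hJ hj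
end

section
/- Let F : [0, ∞) → ℝ be continuous, strictly convex, with lim_{s→∞} F(s) = ∞. Then there exists a continuous, nondecreasing, convex, piecewise-linear function g : [0, ∞) → [0, ∞) with g(0) = 0, lim_{s→∞} g(s)/s = ∞, such that s ↦ 1/(1+g(s)) is NOT integrable on (0, ∞), and limsup_{τ→∞} g(τ)/F(τ) = ∞. -/
open Filter MeasureTheory Real Set

namespace Stmt18

noncomputable def data (F : ℝ → ℝ) : ℕ → ℝ × ℝ × ℝ
  | 0 => (0, 0, max 1 (F 1))
  | n + 1 =>
    let p := data F n
    let L := (1 + p.2.1) * (Real.exp p.2.2 - 1) / p.2.2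
    (p.1 + L, p.2.1 + p.2.2 * L, max p.2.2 (max (n + 2) ((n + 2) * F (p.1 + L + 1))))

variable (F : ℝ → ℝ)

noncomputable def sig (n : ℕ) : ℝ := (data F n).1
noncomputable def vv (n : ℕ) : ℝ := (data F n).2.1
noncomputable def mm (n : ℕ) : ℝ := (data F n).2.2
noncomputable def LL (n : ℕ) : ℝ := (1 + vv F n) * (Real.exp (mm F n) - 1) / mm F n

lemma sig_zero : sig F 0 = 0 := rfl
lemma vv_zero : vv F 0 = 0 := rfl
lemma mm_zero : mm F 0 = max 1 (F 1) := rfl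

lemma sig_succ (n : ℕ) : sig F (n + 1) = sig F n + LL F n := rfl
lemma vv_succ (n : ℕ) : vv F (n + 1) = vv F n + mm F n * LL F n := rfl
lemma mm_succ (n : ℕ) :
    mm F (n + 1) = max (mm F n) (max (n + 2) ((n + 2) * F (sig F (n + 1) + 1))) := rfl

lemma mm_ge (n : ℕ) : (n + 1 : ℝ) ≤ mm F n := by
  cases n with
  | zero => rw [mm_zero]; simpa using le_max_left 1 (F 1)
  | succ k =>
      rw [mm_succ]
      refine le_trans ?_ (le_trans (le_max_left _ _) (le_max_right _ _))
      push_cast; linarith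

lemma one_le_mm (n : ℕ) : (1 : ℝ) ≤ mm F n := by
  have := mm_ge F n
  have : (0:ℝ) ≤ n := Nat.cast_nonneg n
  linarith [mm_ge F n]

lemma mm_pos (n : ℕ) : (0 : ℝ) < mm F n := lt_of_lt_of_le one_pos (one_le_mm F n)

lemma mm_mono : Monotone (mm F) :=
  monotone_nat_of_le_succ fun n => by rw [mm_succ]; exact le_max_left _ _

lemma vv_nonneg (n : ℕ) : 0 ≤ vv F n := by
  induction n with
  | zero => simp [vv_zero]
  | succ k ih =>
      rw [vv_succ]
      have h1 : 0 ≤ LL F k := by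
        have h2 := one_le_mm F k
        have h3 := Real.add_one_le_exp (mm F k)
        unfold LL
        apply div_nonneg _ (by linarith)
        nlinarith
      nlinarith [mm_pos F k]

lemma LL_ge_one (n : ℕ) : 1 ≤ LL F n := by
  unfold LL
  rw [le_div_iff₀ (mm_pos F n)]
  have h1 := Real.add_one_le_exp (mm F n)
  nlinarith [vv_nonneg F n, mm_pos F n]

lemma sig_strictMono : StrictMono (sig F) :=
  strictMono_nat_of_lt_succ fun n => by
    rw [sig_succ]; linarith [LL_ge_one F n]

lemma le_sig (n : ℕ) : (n : ℝ) ≤ sig F n := by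
  induction n with
  | zero => simp [sig_zero]
  | succ k ih => rw [sig_succ]; push_cast; linarith [LL_ge_one F k]

lemma sig_nonneg (n : ℕ) : 0 ≤ sig F n := le_trans (by positivity) (le_sig F n)

lemma mm_mul_LL (n : ℕ) : mm F n * LL F n = (1 + vv F n) * (Real.exp (mm F n) - 1) := by
  unfold LL
  rw [mul_div_assoc', mul_comm, mul_div_assoc]
  rw [div_self (ne_of_gt (mm_pos F n)), mul_one]

lemma vv_exp (n : ℕ) : 1 + vv F (n + 1) = (1 + vv F n) * Real.exp (mm F n) := by
  rw [vv_succ, mm_mul_LL]; ring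

lemma mm_ge_F (n : ℕ) : (n + 1 : ℝ) * F (sig F n + 1) ≤ mm F n := by
  cases n with
  | zero => rw [sig_zero, mm_zero]; simpa using le_max_right 1 (F 1)
  | succ k =>
      rw [mm_succ]
      refine le_trans ?_ (le_trans (le_max_right _ _) (le_max_right _ _))
      push_cast; linarith


noncomputable def line (n : ℕ) (x : ℝ) : ℝ := vv F n + mm F n * (x - sig F n)

lemma line_alt (k : ℕ) (x : ℝ) :
    line F k x = vv F (k + 1) + mm F k * (x - sig F (k + 1)) := by
  unfold line
  rw [vv_succ, sig_succ]; ring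

lemma line_diff (k : ℕ) (x : ℝ) :
    line F (k + 1) x - line F k x = (mm F (k + 1) - mm F k) * (x - sig F (k + 1)) := by
  rw [line_alt F k]; unfold line; ring

lemma line_step_le (k : ℕ) {x : ℝ} (h : x ≤ sig F (k + 1)) :
    line F (k + 1) x ≤ line F k x := by
  have h1 : mm F k ≤ mm F (k + 1) := mm_mono F (Nat.le_succ k)
  nlinarith [line_diff F k x]

lemma line_step_ge (k : ℕ) {x : ℝ} (h : sig F (k + 1) ≤ x) :
    line F k x ≤ line F (k + 1) x := by
  have h1 : mm F k ≤ mm F (k + 1) := mm_mono F (Nat.le_succ k)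
  nlinarith [line_diff F k x]

lemma chain_up {a b : ℕ} (hab : a ≤ b) {x : ℝ} (hx : sig F b ≤ x) :
    line F a x ≤ line F b x := by
  induction b, hab using Nat.le_induction with
  | base => exact le_refl _
  | succ c hc ih =>
      have h1 : sig F c ≤ x :=
        le_trans ((sig_strictMono F).monotone (Nat.le_succ c)) hx
      exact le_trans (ih h1) (line_step_ge F c hx)

lemma chain_down {a b : ℕ} (hab : a ≤ b) {x : ℝ} (hx : x ≤ sig F (a + 1)) :
    line F b x ≤ line F a x := by
  induction b, hab using Nat.le_induction with
  | base => exact le_refl _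
  | succ c hc ih =>
      have h1 : x ≤ sig F (c + 1) :=
        le_trans hx ((sig_strictMono F).monotone (Nat.succ_le_succ hc))
      exact le_trans (line_step_le F c h1) ih

lemma line_le_line (n : ℕ) {x : ℝ} (hx1 : sig F n ≤ x) (hx2 : x ≤ sig F (n + 1))
    (k : ℕ) : line F k x ≤ line F n x := by
  rcases le_or_gt k n with h | h
  · exact chain_up F h hx1
  · exact chain_down F h.le hx2

lemma bdd (x : ℝ) : BddAbove (Set.range fun n => line F n x) := by
  obtain ⟨N, hN⟩ := exists_nat_ge x
  have hxN : x ≤ sig F N := le_trans hN (le_sig F N)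
  refine ⟨(Finset.range (N + 1)).sup' (by simp) (fun k => line F k x), ?_⟩
  rintro y ⟨k, rfl⟩
  rcases le_or_gt k N with h | h
  · exact Finset.le_sup' (fun k => line F k x) (Finset.mem_range.mpr (Nat.lt_succ_of_le h))
  · refine le_trans (chain_down F h.le ?_)
      (Finset.le_sup' (fun k => line F k x) (Finset.mem_range.mpr N.lt_succ_self))
    exact le_trans hxN ((sig_strictMono F).monotone (Nat.le_succ N))

noncomputable def g (x : ℝ) : ℝ := ⨆ n, line F n x

lemma g_eq (n : ℕ) {x : ℝ} (hx1 : sig F n ≤ x) (hx2 : x ≤ sig F (n + 1)) :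
    g F x = line F n x :=
  le_antisymm (ciSup_le (line_le_line F n hx1 hx2)) (le_ciSup (bdd F x) n)

lemma le_g (n : ℕ) (x : ℝ) : line F n x ≤ g F x := le_ciSup (bdd F x) n

lemma g_at_sig (n : ℕ) : g F (sig F n) = vv F n := by
  have h := g_eq F n (le_refl _) ((sig_strictMono F).monotone (Nat.le_succ n))
  rw [h]; unfold line; ring

lemma g_convex : ConvexOn ℝ Set.univ (g F) := by
  refine ⟨convex_univ, fun x _ y _ a b ha hb hab => ?_⟩
  simp only [smul_eq_mul]
  refine ciSup_le fun n => ?_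
  have hline : line F n (a * x + b * y) = a * line F n x + b * line F n y := by
    unfold line
    linear_combination (mm F n * sig F n - vv F n) * hab
  rw [hline]
  exact add_le_add (mul_le_mul_of_nonneg_left (le_g F n x) ha)
    (mul_le_mul_of_nonneg_left (le_g F n y) hb)

lemma g_mono : Monotone (g F) := fun x y hxy => by
  refine ciSup_le fun n => le_trans ?_ (le_g F n y)
  unfold line
  nlinarith [mm_pos F n]

lemma g_cont : Continuous (g F) := by
  have h := (g_convex F).continuousOn isOpen_univ
  exact continuousOn_univ.mp h

lemma g_nonneg {x : ℝ} (hx : 0 ≤ x) : 0 ≤ g F x := by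
  refine le_trans ?_ (le_g F 0 x)
  unfold line
  rw [vv_zero, sig_zero]
  nlinarith [mm_pos F 0]

lemma g_zero : g F 0 = 0 := by
  have := g_at_sig F 0
  rwa [sig_zero, vv_zero] at this


lemma g_integrand_intervalIntegrable (k : ℕ) :
    IntervalIntegrable (fun s => 1 / (1 + g F s)) MeasureTheory.volume
      (sig F k) (sig F (k + 1)) := by
  apply ContinuousOn.intervalIntegrable
  apply ContinuousOn.div continuousOn_const
  · exact (continuous_const.add (g_cont F)).continuousOn
  · intro x hx
    rw [Set.uIcc_of_le ((sig_strictMono F).monotone (Nat.le_succ k))] at hx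
    have h0 : 0 ≤ x := le_trans (sig_nonneg F k) hx.1
    have := g_nonneg F h0
    positivity

lemma integral_piece (k : ℕ) :
    ∫ x in sig F k..sig F (k + 1), 1 / (1 + g F x) = 1 := by
  have hcong : ∫ x in sig F k..sig F (k + 1), 1 / (1 + g F x)
      = ∫ x in sig F k..sig F (k + 1),
          (fun u => u⁻¹) (mm F k * x + (1 + vv F k - mm F k * sig F k)) := by
    apply intervalIntegral.integral_congr
    intro x hx
    rw [Set.uIcc_of_le ((sig_strictMono F).monotone (Nat.le_succ k))] at hx
    show 1 / (1 + g F x) = (mm F k * x + (1 + vv F k - mm F k * sig F k))⁻¹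
    rw [g_eq F k hx.1 hx.2]
    unfold line
    rw [one_div]
    ring_nf
  rw [hcong, intervalIntegral.integral_comp_mul_add _ (ne_of_gt (mm_pos F k)) _]
  have e1 : mm F k * sig F k + (1 + vv F k - mm F k * sig F k) = 1 + vv F k := by ring
  have e2 : mm F k * sig F (k + 1) + (1 + vv F k - mm F k * sig F k)
      = (1 + vv F k) * Real.exp (mm F k) := by
    rw [sig_succ]
    have := mm_mul_LL F k
    ring_nf
    nlinarith [mm_mul_LL F k]
  rw [e1, e2]
  have hv : (0 : ℝ) < 1 + vv F k := by linarith [vv_nonneg F k]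
  have hnot : (0 : ℝ) ∉ Set.uIcc (1 + vv F k) ((1 + vv F k) * Real.exp (mm F k)) := by
    rw [Set.uIcc_of_le]
    · rintro ⟨h1, h2⟩
      linarith
    · nlinarith [Real.add_one_le_exp (mm F k), mm_pos F k]
  rw [integral_inv hnot]
  have e3 : (1 + vv F k) * Real.exp (mm F k) / (1 + vv F k) = Real.exp (mm F k) := by
    field_simp
  rw [e3, Real.log_exp, smul_eq_mul, inv_mul_cancel₀ (ne_of_gt (mm_pos F k))]

lemma integral_head (N : ℕ) :
    ∫ x in (0:ℝ)..(sig F N), 1 / (1 + g F x) = N := by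
  have h := intervalIntegral.sum_integral_adjacent_intervals
    (f := fun s => 1 / (1 + g F s)) (μ := MeasureTheory.volume) (a := sig F)
    (n := N) (fun k _ => g_integrand_intervalIntegrable F k)
  rw [sig_zero] at h
  rw [← h]
  have : ∀ k ∈ Finset.range N, (∫ x in sig F k..sig F (k+1), 1 / (1 + g F x)) = 1 :=
    fun k _ => integral_piece F k
  rw [Finset.sum_congr rfl this]
  simp

lemma not_integrable :
    ¬ MeasureTheory.IntegrableOn (fun s => 1 / (1 + g F s)) (Set.Ioi 0) := by
  intro h
  set C := ∫ s in Set.Ioi (0:ℝ), 1 / (1 + g F s) with hC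
  have hbound : ∀ N : ℕ, (N : ℝ) ≤ C := by
    intro N
    have h1 : ∫ s in Set.Ioc (0:ℝ) (sig F N), 1 / (1 + g F s) ≤ C := by
      apply MeasureTheory.setIntegral_mono_set h
      · filter_upwards [MeasureTheory.ae_restrict_mem measurableSet_Ioi] with x hx
        have := g_nonneg F (le_of_lt hx)
        positivity
      · exact Filter.Eventually.of_forall fun x hx => hx.1
    have h2 : ∫ s in Set.Ioc (0:ℝ) (sig F N), 1 / (1 + g F s)
        = ∫ x in (0:ℝ)..(sig F N), 1 / (1 + g F x) :=
      (intervalIntegral.integral_of_le (sig_nonneg F N)).symm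
    rw [h2, integral_head] at h1
    exact h1
  obtain ⟨N, hN⟩ := exists_nat_gt C
  exact absurd (hbound N) (not_le.mpr hN)


lemma sig_tendsto : Tendsto (sig F) atTop atTop :=
  tendsto_atTop_mono (le_sig F) tendsto_natCast_atTop_atTop

lemma g_superlinear : Tendsto (fun s => g F s / s) atTop atTop := by
  rw [tendsto_atTop]
  intro C
  obtain ⟨n, hn⟩ := exists_nat_ge C
  filter_upwards [eventually_ge_atTop (max 1 (mm F n * sig F n))] with s hs
  have hs1 : (1:ℝ) ≤ s := le_trans (le_max_left _ _) hs
  have hs0 : (0:ℝ) < s := lt_of_lt_of_le one_pos hs1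
  have hs2 : mm F n * sig F n ≤ s := le_trans (le_max_right _ _) hs
  have hgl : mm F n * s - mm F n * sig F n ≤ g F s := by
    have h := le_g F n s
    unfold line at h
    nlinarith [vv_nonneg F n]
  rw [le_div_iff₀ hs0]
  have hmn : C + 1 ≤ mm F n := le_trans (by push_cast; linarith) (mm_ge F n)
  nlinarith [mul_le_mul_of_nonneg_right hmn hs0.le]

lemma g_freq (hFtop : Tendsto F atTop atTop) (M : ℝ) :
    ∃ᶠ τ in atTop, M ≤ g F τ / F τ := by
  rw [Filter.frequently_atTop]
  intro a
  have hσtop : Tendsto (fun n : ℕ => sig F n + 1) atTop atTop :=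
    tendsto_atTop_add_const_right _ 1 (sig_tendsto F)
  have hF : ∀ᶠ n in atTop, 1 ≤ F (sig F n + 1) :=
    (hFtop.comp hσtop).eventually_ge_atTop 1
  obtain ⟨n0, hn0⟩ := Filter.eventually_atTop.mp hF
  obtain ⟨nM, hnM⟩ := exists_nat_ge M
  obtain ⟨na, hna⟩ := exists_nat_ge a
  set n := max n0 (max nM na) with hndef
  set τ := sig F n + 1 with hτdef
  have hna' : (na : ℝ) ≤ n :=
    Nat.cast_le.mpr (le_trans (le_max_right nM na) (le_max_right n0 _))
  have hτa : a ≤ τ := by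
    have := le_sig F n
    linarith
  have hFτ : 1 ≤ F τ := hn0 n (le_max_left _ _)
  have hFτ0 : 0 < F τ := lt_of_lt_of_le one_pos hFτ
  have hmem2 : τ ≤ sig F (n + 1) := by
    rw [sig_succ]
    linarith [LL_ge_one F n]
  have hg : g F τ = vv F n + mm F n := by
    rw [g_eq F n (by linarith) hmem2]
    unfold line
    ring
  have hMn : M ≤ (n : ℝ) + 1 := by
    have h1 : (nM : ℝ) ≤ n :=
      Nat.cast_le.mpr (le_trans (le_max_left nM na) (le_max_right n0 _))
    linarith
  have key : M * F τ ≤ g F τ := by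
    have h1 : ((n : ℝ) + 1) * F τ ≤ mm F n := mm_ge_F F n
    have h2 : M * F τ ≤ ((n : ℝ) + 1) * F τ :=
      mul_le_mul_of_nonneg_right hMn hFτ0.le
    have := vv_nonneg F n
    rw [hg]
    linarith
  exact ⟨τ, hτa, (le_div_iff₀ hFτ0).mpr key⟩

end Stmt18

/-- For any continuous, strictly convex `F` with `F(s) → ∞`, there is a continuous,
nondecreasing, convex, piecewise-linear `g ≥ 0` with `g(0) = 0`, `g(s)/s → ∞`, such that
`1/(1+g)` is NOT integrable on `(0,∞)` and `limsup_{τ→∞} g(τ)/F(τ) = ∞`. -/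
theorem stmt_18 (F : ℝ → ℝ)
    (hFc : ContinuousOn F (Set.Ici 0))
    (hFconv : StrictConvexOn ℝ (Set.Ici 0) F)
    (hFtop : Filter.Tendsto F Filter.atTop Filter.atTop) :
    ∃ g : ℝ → ℝ,
      ContinuousOn g (Set.Ici 0) ∧ MonotoneOn g (Set.Ici 0) ∧
      ConvexOn ℝ (Set.Ici 0) g ∧ (∀ s : ℝ, 0 ≤ s → 0 ≤ g s) ∧ g 0 = 0 ∧
      Filter.Tendsto (fun s => g s / s) Filter.atTop Filter.atTop ∧
      ¬ MeasureTheory.IntegrableOn (fun s => 1 / (1 + g s)) (Set.Ioi 0) ∧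
      (∀ M : ℝ, ∃ᶠ τ in Filter.atTop, M ≤ g τ / F τ) ∧
      ∃ (σ : ℕ → ℝ) (m : ℕ → ℝ), StrictMono σ ∧ σ 0 = 0 ∧
        Filter.Tendsto σ Filter.atTop Filter.atTop ∧
        ∀ n : ℕ, ∀ x ∈ Set.Icc (σ n) (σ (n + 1)), g x = g (σ n) + m n * (x - σ n) := by
  refine ⟨Stmt18.g F, (Stmt18.g_cont F).continuousOn, (Stmt18.g_mono F).monotoneOn _,
    (Stmt18.g_convex F).subset (Set.subset_univ _) (convex_Ici 0),
    fun s hs => Stmt18.g_nonneg F hs, Stmt18.g_zero F, Stmt18.g_superlinear F,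
    Stmt18.not_integrable F, Stmt18.g_freq F hFtop,
    Stmt18.sig F, Stmt18.mm F, Stmt18.sig_strictMono F, Stmt18.sig_zero F,
    Stmt18.sig_tendsto F, ?_⟩
  intro n x hx
  rw [Stmt18.g_eq F n hx.1 hx.2, Stmt18.g_at_sig F n]
  rfl
end
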